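/- For every integer r ≥ 1, the decomposition 𝐏_{r−1} = ∇×𝐏_r ⊕ 𝔭(P_{r−2}) holds: every vector field v on ℝ³ with polynomial components of total degree at most r−1 can be written as v = ∇×q + 𝔭p with q ∈ 𝐏_r and p ∈ P_{r−2}, and the two subspaces ∇×𝐏_r and 𝔭(P_{r−2}) intersect only in {0}. -/

import Mathlib

open MeasureTheory

/-- Divergence of a vector field on ℝ³. -/
noncomputable def pdiv (v : (Fin 3 → ℝ) → (Fin 3 → ℝ)) (x : Fin 3 → ℝ) : ℝ :=
  ∑ i : Fin 3, fderiv ℝ (fun y => v y i) x (Pi.single i 1)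

/-- Curl of a vector field on ℝ³. -/
noncomputable def pcurl (v : (Fin 3 → ℝ) → (Fin 3 → ℝ)) (x : Fin 3 → ℝ) : Fin 3 → ℝ :=
  ![fderiv ℝ (fun y => v y 2) x (Pi.single 1 1) - fderiv ℝ (fun y => v y 1) x (Pi.single 2 1),
    fderiv ℝ (fun y => v y 0) x (Pi.single 2 1) - fderiv ℝ (fun y => v y 2) x (Pi.single 0 1),
    fderiv ℝ (fun y => v y 1) x (Pi.single 0 1) - fderiv ℝ (fun y => v y 0) x (Pi.single 1 1)]

/-- Gradient of a scalar field on ℝ³. -/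
noncomputable def pgrad (p : (Fin 3 → ℝ) → ℝ) (x : Fin 3 → ℝ) : Fin 3 → ℝ :=
  fun i => fderiv ℝ p x (Pi.single i 1)

/-- The Poincaré-type operator 𝔭: (𝔭u)(x) = (∫₀¹ t² u(tx) dt) x. -/
noncomputable def poin (u : (Fin 3 → ℝ) → ℝ) (x : Fin 3 → ℝ) : Fin 3 → ℝ :=
  (∫ t in (0:ℝ)..1, t ^ 2 * u (t • x)) • x

/-- `u` is a polynomial function of total degree at most `r` (P_r = {0} if r < 0). -/
def IsPolyDeg (r : ℤ) (u : (Fin 3 → ℝ) → ℝ) : Prop :=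
  ∃ p : MvPolynomial (Fin 3) ℝ, (p = 0 ∨ (p.totalDegree : ℤ) ≤ r) ∧
    ∀ x, MvPolynomial.eval x p = u x

/-- `v` is a vector field with polynomial components of total degree at most `r`. -/
def IsVecPolyDeg (r : ℤ) (v : (Fin 3 → ℝ) → (Fin 3 → ℝ)) : Prop :=
  ∀ i, IsPolyDeg r fun x => v x i

/-- `u` is a polynomial function. -/
def IsPolyFun (u : (Fin 3 → ℝ) → ℝ) : Prop :=
  ∃ p : MvPolynomial (Fin 3) ℝ, ∀ x, MvPolynomial.eval x p = u x

/-- Membership in S_k = {p ∈ (P̃_k)³ : x·p(x) = 0}. -/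
def MemS (k : ℕ) (v : (Fin 3 → ℝ) → (Fin 3 → ℝ)) : Prop :=
  (∀ i, ∃ p : MvPolynomial (Fin 3) ℝ, p.IsHomogeneous k ∧ ∀ x, MvPolynomial.eval x p = v x i) ∧
    ∀ x, ∑ i : Fin 3, x i * v x i = 0

/-- Membership in the first-family Nédélec space R_k = 𝐏_{k-1} ⊕ S_k. -/
def MemR (k : ℕ) (v : (Fin 3 → ℝ) → (Fin 3 → ℝ)) : Prop :=
  ∃ v₁ v₂, IsVecPolyDeg ((k : ℤ) - 1) v₁ ∧ MemS k v₂ ∧ v = v₁ + v₂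

/-!
For polynomial fields everything is algebraic. The operator `poin` multiplies a homogeneous
`P` of degree `e` by `x/(e+3)`, so Euler's identity gives `div (poin P) = P`; together with
`div ∘ curl = 0` this makes the intersection trivial. For the decomposition, split `v` into
homogeneous parts. For a part of degree `d`, subtracting `poin (div v)` leaves a divergence-free
homogeneous field `w` of degree `d`, and for such a field Euler's identity gives
`curl (w × x) = (d + 2) w`.
-/

open MvPolynomial

namespace MvPolynomial

variable {σ R : Type*} [CommSemiring R]

theorem pderiv_pderiv_comm (i j : σ) (p : MvPolynomial σ R) :
    pderiv i (pderiv j p) = pderiv j (pderiv i p) := by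
  classical
  induction p using MvPolynomial.induction_on with
  | C a => simp
  | add p q hp hq => simp [hp, hq]
  | mul_X p k hp =>
    simp only [pderiv_mul, map_add, pderiv_X, hp, Pi.single_apply]
    split_ifs <;> simp only [pderiv_one, map_zero] <;> ring

theorem IsHomogeneous.eval_smul {P : MvPolynomial σ R} {n : ℕ} (hP : P.IsHomogeneous n)
    (t : R) (x : σ → R) : eval (t • x) P = t ^ n * eval x P := by
  conv_lhs => rw [P.as_sum]
  conv_rhs => rw [P.as_sum]
  simp only [map_sum, Finset.mul_sum, eval_monomial]
  refine Finset.sum_congr rfl fun m hm => ?_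
  simp only [Finsupp.prod, Pi.smul_apply, smul_eq_mul, mul_pow, Finset.prod_mul_distrib,
    Finset.prod_pow_eq_pow_sum, ← hP.degree_eq_sum_deg_support hm]
  ring

theorem totalDegree_pderiv_le (i : σ) (p : MvPolynomial σ R) :
    (pderiv i p).totalDegree ≤ p.totalDegree - 1 := by
  conv_lhs => rw [← sum_homogeneousComponent p]
  rw [map_sum]
  refine totalDegree_finsetSum_le fun e he => ?_
  have he' := Finset.mem_range.1 he
  exact (homogeneousComponent_isHomogeneous e p).pderiv.totalDegree_le.trans (by omega)

theorem sum_homogeneousComponent_of_totalDegree_le {p : MvPolynomial σ R} {n : ℕ}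
    (hp : p.totalDegree ≤ n) : ∑ e ∈ Finset.range (n + 1), homogeneousComponent e p = p := by
  conv_rhs => rw [← sum_homogeneousComponent p]
  refine (Finset.sum_subset (Finset.range_subset_range.2 (by omega)) fun e _ he => ?_).symm
  exact homogeneousComponent_eq_zero _ _ (by simp only [Finset.mem_range] at he; omega)

variable {K : Type*} [Field K]

/-- The polynomial counterpart of `u ↦ ∫₀¹ t² u(t x) dt`: on a monomial of degree `e` the
integral is `∫₀¹ t^(e+2) dt = 1/(e+3)`. -/
noncomputable def radialIntegral : MvPolynomial σ K →ₗ[K] MvPolynomial σ K :=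
  (basisMonomials σ K).constr K fun m => ((m.degree : K) + 3)⁻¹ • monomial m 1

theorem radialIntegral_monomial (m : σ →₀ ℕ) (c : K) :
    radialIntegral (monomial m c) = ((m.degree : K) + 3)⁻¹ • monomial m c := by
  have hc : monomial m c = c • monomial m (1 : K) := by rw [smul_monomial, smul_eq_mul, mul_one]
  have hbasis :
      radialIntegral (monomial m (1 : K)) = ((m.degree : K) + 3)⁻¹ • monomial m 1 := by
    simpa [radialIntegral] using (basisMonomials σ K).constr_basis K
      (fun m => ((m.degree : K) + 3)⁻¹ • monomial m (1 : K)) m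
  rw [hc, map_smul, hbasis, smul_comm]

theorem radialIntegral_of_isHomogeneous {P : MvPolynomial σ K} {n : ℕ} (hP : P.IsHomogeneous n) :
    radialIntegral P = ((n : K) + 3)⁻¹ • P := by
  conv_lhs => rw [P.as_sum]
  conv_rhs => rw [P.as_sum]
  simp only [map_sum, Finset.smul_sum, radialIntegral_monomial]
  refine Finset.sum_congr rfl fun m hm => ?_
  rw [Finsupp.degree_apply, ← hP.degree_eq_sum_deg_support hm]

theorem IsHomogeneous.integral_sq_mul_eval_smul {P : MvPolynomial σ ℝ} {n : ℕ}
    (hP : P.IsHomogeneous n) (x : σ → ℝ) :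
    ∫ t in (0 : ℝ)..1, t ^ 2 * eval (t • x) P = eval x (radialIntegral P) := by
  have h : ∀ t : ℝ, t ^ 2 * eval (t • x) P = eval x P * t ^ (n + 2) := fun t => by
    rw [hP.eval_smul]; ring
  simp_rw [h, radialIntegral_of_isHomogeneous hP, smul_eval, intervalIntegral.integral_const_mul,
    integral_pow]
  push_cast
  ring

theorem integral_sq_mul_eval_smul (P : MvPolynomial σ ℝ) (x : σ → ℝ) :
    ∫ t in (0 : ℝ)..1, t ^ 2 * eval (t • x) P = eval x (radialIntegral P) := by
  have h : ∀ t : ℝ, t ^ 2 * eval (t • x) P = ∑ e ∈ Finset.range (P.totalDegree + 1),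
      t ^ 2 * eval (t • x) (homogeneousComponent e P) := fun t => by
    conv_lhs => rw [← sum_homogeneousComponent P]
    rw [map_sum, Finset.mul_sum]
  simp_rw [h]
  rw [intervalIntegral.integral_finsetSum fun e _ => Continuous.intervalIntegrable
    (by have := continuous_eval (homogeneousComponent e P); fun_prop) _ _]
  conv_rhs => rw [← sum_homogeneousComponent P, map_sum, map_sum]
  exact Finset.sum_congr rfl fun e _ =>
    (homogeneousComponent_isHomogeneous e P).integral_sq_mul_eval_smul x

section Differentiation

variable [Fintype σ]

theorem hasFDerivAt_eval (p : MvPolynomial σ ℝ) (x : σ → ℝ) :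
    HasFDerivAt (fun y => eval y p)
      (∑ i, eval x (pderiv i p) • (ContinuousLinearMap.proj i : (σ → ℝ) →L[ℝ] ℝ)) x := by
  classical
  induction p using MvPolynomial.induction_on with
  | C a => simpa using hasFDerivAt_const a x
  | add p q hp hq =>
    simp only [map_add, add_smul, Finset.sum_add_distrib]
    exact hp.add hq
  | mul_X p k hp =>
    simp only [map_mul, eval_X]
    refine (hp.mul (hasFDerivAt_apply k x)).congr_fderiv ?_
    ext v
    simp [pderiv_X, Pi.single_apply, add_mul, Finset.sum_add_distrib, Finset.mul_sum,
      apply_ite (eval x), ite_mul, mul_assoc]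

theorem fderiv_eval_single [DecidableEq σ] (p : MvPolynomial σ ℝ) (x : σ → ℝ) (i : σ) :
    fderiv ℝ (fun y => eval y p) x (Pi.single i 1) = eval x (pderiv i p) := by
  simp [(hasFDerivAt_eval p x).fderiv, Pi.single_apply]

end Differentiation

end MvPolynomial

section VectorCalculus

variable {R : Type*} [CommRing R]

noncomputable def polyDiv : (Fin 3 → MvPolynomial (Fin 3) R) →ₗ[R] MvPolynomial (Fin 3) R :=
  ∑ i, (pderiv i).toLinearMap ∘ₗ LinearMap.proj i

noncomputable def polyCurl :
    (Fin 3 → MvPolynomial (Fin 3) R) →ₗ[R] Fin 3 → MvPolynomial (Fin 3) R :=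
  LinearMap.pi ![
    (pderiv 1).toLinearMap ∘ₗ LinearMap.proj 2 - (pderiv 2).toLinearMap ∘ₗ LinearMap.proj 1,
    (pderiv 2).toLinearMap ∘ₗ LinearMap.proj 0 - (pderiv 0).toLinearMap ∘ₗ LinearMap.proj 2,
    (pderiv 0).toLinearMap ∘ₗ LinearMap.proj 1 - (pderiv 1).toLinearMap ∘ₗ LinearMap.proj 0]

noncomputable def crossX (v : Fin 3 → MvPolynomial (Fin 3) R) :
    Fin 3 → MvPolynomial (Fin 3) R :=
  ![v 1 * X 2 - v 2 * X 1, v 2 * X 0 - v 0 * X 2, v 0 * X 1 - v 1 * X 0]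

theorem polyDiv_apply (v : Fin 3 → MvPolynomial (Fin 3) R) :
    polyDiv v = ∑ i, pderiv i (v i) := by
  simp [polyDiv]

theorem polyCurl_apply (v : Fin 3 → MvPolynomial (Fin 3) R) :
    polyCurl v = ![pderiv 1 (v 2) - pderiv 2 (v 1), pderiv 2 (v 0) - pderiv 0 (v 2),
      pderiv 0 (v 1) - pderiv 1 (v 0)] := by
  ext i : 1
  fin_cases i <;> rfl

theorem polyDiv_polyCurl (v : Fin 3 → MvPolynomial (Fin 3) R) : polyDiv (polyCurl v) = 0 := by
  simp only [polyDiv_apply, polyCurl_apply, Fin.sum_univ_three, Matrix.cons_val, map_sub]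
  rw [pderiv_pderiv_comm 0 1, pderiv_pderiv_comm 0 2, pderiv_pderiv_comm 1 2]
  ring

theorem polyDiv_mul_X {P : MvPolynomial (Fin 3) R} {d : ℕ} (hP : P.IsHomogeneous d) :
    polyDiv (fun i => P * X i) = ((d : R) + 3) • P := by
  have hterm : ∀ i, pderiv i (P * X i) = X i * pderiv i P + P := fun i => by
    rw [pderiv_mul, pderiv_X_self, mul_one, mul_comm]
  rw [polyDiv_apply, Finset.sum_congr rfl fun i _ => hterm i, Finset.sum_add_distrib,
    hP.sum_X_mul_pderiv, Finset.sum_const, Finset.card_univ, Fintype.card_fin]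
  module

theorem crossX_isHomogeneous {v : Fin 3 → MvPolynomial (Fin 3) R} {d : ℕ}
    (hv : ∀ i, (v i).IsHomogeneous d) (i : Fin 3) : (crossX v i).IsHomogeneous (d + 1) := by
  have hmul : ∀ j k, (v j * X k).IsHomogeneous (d + 1) := fun j k =>
    (hv j).mul (isHomogeneous_X _ k)
  fin_cases i <;> exact (hmul _ _).sub (hmul _ _)

theorem polyCurl_crossX {w : Fin 3 → MvPolynomial (Fin 3) R} {d : ℕ}
    (hw : ∀ i, (w i).IsHomogeneous d) (hdiv : polyDiv w = 0) :
    polyCurl (crossX w) = ((d : R) + 2) • w := by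
  have euler : ∀ i, ∑ j, X j * pderiv j (w i) = d * w i := fun i => by
    rw [(hw i).sum_X_mul_pderiv, nsmul_eq_mul]
  simp only [Fin.sum_univ_three] at euler
  rw [polyDiv_apply, Fin.sum_univ_three] at hdiv
  ext i : 1
  fin_cases i <;>
    simp only [crossX, polyCurl_apply, Fin.isValue, Fin.zero_eta, Fin.mk_one, Fin.reduceFinMk,
      Matrix.cons_val, Matrix.cons_val_zero, Matrix.cons_val_one, map_sub, Derivation.leibniz,
      pderiv_X, Pi.single_eq_same, ne_eq, Fin.reduceEq, not_false_eq_true, Pi.single_eq_of_ne,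
      zero_ne_one, one_ne_zero, smul_eq_mul, mul_one, mul_zero, zero_add, Pi.smul_apply,
      smul_eq_C_mul, C_add, map_natCast, map_ofNat] <;>
    [linear_combination euler 0 - X 0 * hdiv; linear_combination euler 1 - X 1 * hdiv;
      linear_combination euler 2 - X 2 * hdiv]

theorem polyDiv_isHomogeneous {v : Fin 3 → MvPolynomial (Fin 3) R} {d : ℕ}
    (hv : ∀ i, (v i).IsHomogeneous d) : (polyDiv v).IsHomogeneous (d - 1) := by
  rw [polyDiv_apply]
  exact IsHomogeneous.sum _ _ _ fun i _ => (hv i).pderiv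

theorem polyDiv_eq_zero_of_totalDegree_eq_zero {v : Fin 3 → MvPolynomial (Fin 3) R}
    (hv : ∀ i, (v i).totalDegree = 0) : polyDiv v = 0 := by
  rw [polyDiv_apply]
  refine Finset.sum_eq_zero fun i _ => ?_
  rw [totalDegree_eq_zero_iff_eq_C.1 (hv i), pderiv_C]

theorem polyDiv_mul_X_isHomogeneous {v : Fin 3 → MvPolynomial (Fin 3) R} {d : ℕ}
    (hv : ∀ i, (v i).IsHomogeneous d) (j : Fin 3) : (polyDiv v * X j).IsHomogeneous d := by
  rcases d with _ | d
  · have hv0 : ∀ i, (v i).totalDegree = 0 := fun i =>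
      (totalDegree_zero_iff_isHomogeneous _).2 (hv i)
    rw [polyDiv_eq_zero_of_totalDegree_eq_zero hv0, zero_mul]
    exact isHomogeneous_zero _ _ _
  · exact (polyDiv_isHomogeneous hv).mul (isHomogeneous_X R j)

theorem polyDiv_eq_zero_or_totalDegree_lt {V : Fin 3 → MvPolynomial (Fin 3) R} {n : ℕ}
    (hV : ∀ i, (V i).totalDegree ≤ n) : polyDiv V = 0 ∨ (polyDiv V).totalDegree < n := by
  rcases n with _ | n
  · exact Or.inl (polyDiv_eq_zero_of_totalDegree_eq_zero fun i => Nat.le_zero.1 (hV i))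
  · refine Or.inr (Nat.lt_succ_of_le ?_)
    rw [polyDiv_apply]
    exact totalDegree_finsetSum_le fun i _ => (totalDegree_pderiv_le i (V i)).trans (by
      have := hV i; omega)

end VectorCalculus

section Poincare

variable {K : Type*} [Field K]

noncomputable def polyPoincare :
    MvPolynomial (Fin 3) K →ₗ[K] Fin 3 → MvPolynomial (Fin 3) K :=
  LinearMap.pi fun i => LinearMap.mulRight K (X i) ∘ₗ radialIntegral

theorem polyPoincare_apply (P : MvPolynomial (Fin 3) K) (i : Fin 3) :
    polyPoincare P i = radialIntegral P * X i := rfl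

theorem polyPoincare_of_isHomogeneous {P : MvPolynomial (Fin 3) K} {d : ℕ}
    (hP : P.IsHomogeneous d) : polyPoincare P = ((d : K) + 3)⁻¹ • fun i => P * X i := by
  ext i : 1
  rw [polyPoincare_apply, radialIntegral_of_isHomogeneous hP, Pi.smul_apply, smul_mul_assoc]

variable [CharZero K]

theorem polyDiv_polyPoincare (P : MvPolynomial (Fin 3) K) : polyDiv (polyPoincare P) = P := by
  conv_lhs => rw [← sum_homogeneousComponent P]
  conv_rhs => rw [← sum_homogeneousComponent P]
  simp only [map_sum]
  refine Finset.sum_congr rfl fun e _ => ?_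
  have he := homogeneousComponent_isHomogeneous e P
  rw [polyPoincare_of_isHomogeneous he, map_smul, polyDiv_mul_X he, smul_smul,
    inv_mul_cancel₀ (by norm_cast), one_smul]

theorem exists_eq_polyCurl_add_polyPoincare_of_isHomogeneous {v : Fin 3 → MvPolynomial (Fin 3) K}
    {d : ℕ} (hv : ∀ i, (v i).IsHomogeneous d) :
    ∃ Q, (∀ i, (Q i).IsHomogeneous (d + 1)) ∧ v = polyCurl Q + polyPoincare (polyDiv v) := by
  set P := polyDiv v
  have hP : polyPoincare P = (((d - 1 : ℕ) : K) + 3)⁻¹ • fun i => P * X i :=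
    polyPoincare_of_isHomogeneous (polyDiv_isHomogeneous hv)
  set w := v - polyPoincare P with hw_def
  have hw : ∀ i, (w i).IsHomogeneous d := fun i => by
    rw [hw_def, Pi.sub_apply, hP, Pi.smul_apply, smul_eq_C_mul]
    exact (hv i).sub ((polyDiv_mul_X_isHomogeneous hv i).C_mul _)
  have hdiv : polyDiv w = 0 := by
    rw [map_sub, hP, map_smul, polyDiv_mul_X (polyDiv_isHomogeneous hv), smul_smul,
      inv_mul_cancel₀ (by norm_cast), one_smul, sub_self]
  refine ⟨((d : K) + 2)⁻¹ • crossX w, fun i => ?_, ?_⟩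
  · rw [Pi.smul_apply, smul_eq_C_mul]
    exact (crossX_isHomogeneous hw i).C_mul _
  · rw [map_smul, polyCurl_crossX hw hdiv, smul_smul, inv_mul_cancel₀ (by norm_cast), one_smul,
      sub_add_cancel]

theorem exists_eq_polyCurl_add_polyPoincare {V : Fin 3 → MvPolynomial (Fin 3) K} {n : ℕ}
    (hV : ∀ i, (V i).totalDegree ≤ n) :
    ∃ Q, (∀ i, (Q i).totalDegree ≤ n + 1) ∧ V = polyCurl Q + polyPoincare (polyDiv V) := by
  set v : ℕ → Fin 3 → MvPolynomial (Fin 3) K := fun d i => homogeneousComponent d (V i)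
  have hsum : ∑ d ∈ Finset.range (n + 1), v d = V := funext fun i => by
    rw [Finset.sum_apply]
    exact sum_homogeneousComponent_of_totalDegree_le (hV i)
  choose Q hQ hvQ using fun d =>
    exists_eq_polyCurl_add_polyPoincare_of_isHomogeneous fun i =>
      homogeneousComponent_isHomogeneous d (V i)
  refine ⟨∑ d ∈ Finset.range (n + 1), Q d, fun i => ?_, ?_⟩
  · rw [Finset.sum_apply]
    refine totalDegree_finsetSum_le fun d hd => (hQ d i).totalDegree_le.trans ?_
    have := Finset.mem_range.1 hd
    omega
  · calc V = ∑ d ∈ Finset.range (n + 1), v d := hsum.symm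
      _ = ∑ d ∈ Finset.range (n + 1), (polyCurl (Q d) + polyPoincare (polyDiv (v d))) :=
        Finset.sum_congr rfl fun d _ => hvQ d
      _ = polyCurl (∑ d ∈ Finset.range (n + 1), Q d) + polyPoincare (polyDiv V) := by
        rw [← hsum, Finset.sum_add_distrib, map_sum, map_sum, map_sum]

theorem eq_zero_of_polyCurl_eq_polyPoincare {Q : Fin 3 → MvPolynomial (Fin 3) K}
    {P : MvPolynomial (Fin 3) K} (h : polyCurl Q = polyPoincare P) : P = 0 := by
  simpa only [polyDiv_polyCurl, polyDiv_polyPoincare] using (congrArg polyDiv h).symm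

end Poincare

theorem pcurl_eval (Q : Fin 3 → MvPolynomial (Fin 3) ℝ) (x : Fin 3 → ℝ) :
    pcurl (fun y i => eval y (Q i)) x = fun i => eval x (polyCurl Q i) := by
  ext i
  fin_cases i <;> simp [pcurl, polyCurl_apply, fderiv_eval_single]

theorem poin_eval (P : MvPolynomial (Fin 3) ℝ) (x : Fin 3 → ℝ) :
    poin (fun y => eval y P) x = fun i => eval x (polyPoincare P i) := by
  ext i
  simp [poin, integral_sq_mul_eval_smul, polyPoincare_apply]

theorem IsPolyDeg.exists_totalDegree_le {n : ℕ} {u : (Fin 3 → ℝ) → ℝ}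
    (h : IsPolyDeg n u) :
    ∃ p : MvPolynomial (Fin 3) ℝ, p.totalDegree ≤ n ∧ ∀ x, eval x p = u x := by
  obtain ⟨p, hp | hp, hpu⟩ := h
  · exact ⟨p, by simp [hp], hpu⟩
  · exact ⟨p, by exact_mod_cast hp, hpu⟩

/-- the decomposition 𝐏_{r-1} = ∇×𝐏_r ⊕ 𝔭(P_{r-2}) for r ≥ 1. -/
theorem stmt_4 (r : ℤ) (hr : 1 ≤ r) :
    (∀ v : (Fin 3 → ℝ) → (Fin 3 → ℝ), IsVecPolyDeg (r - 1) v →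
      ∃ (q : (Fin 3 → ℝ) → (Fin 3 → ℝ)) (p : (Fin 3 → ℝ) → ℝ),
        IsVecPolyDeg r q ∧ IsPolyDeg (r - 2) p ∧ ∀ x, v x = pcurl q x + poin p x) ∧
    ∀ (q : (Fin 3 → ℝ) → (Fin 3 → ℝ)) (p : (Fin 3 → ℝ) → ℝ),
      IsVecPolyDeg r q → IsPolyDeg (r - 2) p → (∀ x, pcurl q x = poin p x) →
      ∀ x, pcurl q x = 0 := by
  obtain ⟨n, rfl⟩ : ∃ n : ℕ, r = n + 1 := ⟨(r - 1).toNat, by omega⟩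
  refine ⟨fun v hv => ?_, fun q p hq hp heq x => ?_⟩
  · have hv : IsVecPolyDeg n v := by simpa using hv
    choose V hV hVv using fun i => (hv i).exists_totalDegree_le
    obtain ⟨Q, hQ, hVQ⟩ := exists_eq_polyCurl_add_polyPoincare hV
    refine ⟨fun x i => eval x (Q i), fun x => eval x (polyDiv V),
      fun i => ⟨Q i, Or.inr (by exact_mod_cast hQ i), fun _ => rfl⟩,
      ⟨polyDiv V, ?_, fun _ => rfl⟩, fun x => funext fun i => ?_⟩
    · rcases polyDiv_eq_zero_or_totalDegree_lt hV with h | h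
      · exact Or.inl h
      · exact Or.inr (by omega)
    · rw [pcurl_eval, poin_eval, Pi.add_apply, ← hVv i x, congrFun hVQ i, Pi.add_apply, map_add]
  · choose Q _ hQ using hq
    obtain ⟨P, -, hP⟩ := hp
    obtain rfl : q = fun y i => eval y (Q i) := funext₂ fun y i => (hQ i y).symm
    obtain rfl : p = fun y => eval y P := funext fun y => (hP y).symm
    have hQP : polyCurl Q = polyPoincare P := funext fun i => MvPolynomial.funext fun y => by
      simpa only [pcurl_eval, poin_eval] using congrFun (heq y) i
    rw [pcurl_eval, hQP, eq_zero_of_polyCurl_eq_polyPoincare hQP, map_zero]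
    rfl
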